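/- arXiv:2408.16108 — 4 statements merged into one kernel-verified Lean document; each statement's English description precedes it below -/
import Mathlib

section
/- Suppose integers a_1,...,a_n, target T, e_1,...,e_n ∈ {0,1}, μ, and odd p > 0 satisfy Σ e_i·a_i = T and Σ_{i=1}^n |⟨μa_i⟩_p| < p/2. Then the exact (not just modular) equality Σ e_i·⟨μa_i⟩_p = ⟨μT⟩_p holds over ℤ. -/
/-- The centered residue of `x` modulo `p`: for odd `p > 0`, the unique representative
of `x mod p` in `(-p/2, p/2)`. -/
def cres (p x : ℤ) : ℤ := if x % p ≤ p / 2 then x % p else x % p - p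

lemma cres_dvd_sub (p x : ℤ) : p ∣ x - cres p x := by
  unfold cres
  have h := Int.emod_add_mul_ediv x p
  split
  · exact ⟨x / p, by linarith⟩
  · exact ⟨x / p + 1, by ring_nf; linarith⟩

lemma cres_abs_lt (p x : ℤ) (hp : 0 < p) (hodd : Odd p) : 2 * |cres p x| < p := by
  unfold cres
  have h1 := Int.emod_nonneg x hp.ne'
  have h2 := Int.emod_lt_of_pos x hp
  obtain ⟨k, hk⟩ := hodd
  subst hk
  split
  · rw [abs_of_nonneg h1]; omega
  · rw [abs_of_nonpos (by omega)]; omega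

theorem stmt1 (n : ℕ) (a : Fin n → ℤ) (T : ℤ) (e : Fin n → ℤ)
    (he : ∀ i, e i = 0 ∨ e i = 1) (hT : ∑ i, e i * a i = T)
    (μ p : ℤ) (hp : 0 < p) (hodd : Odd p)
    (hl1 : 2 * ∑ i, |cres p (μ * a i)| < p) :
    (∑ i, e i * cres p (μ * a i)) = cres p (μ * T) := by
  set S := ∑ i, e i * cres p (μ * a i) with hS
  have hdvd : p ∣ cres p (μ * T) - S := by
    have h1 : p ∣ μ * T - S := by
      have : μ * T - S = ∑ i, e i * (μ * a i - cres p (μ * a i)) := by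
        rw [hS, ← hT, Finset.mul_sum, ← Finset.sum_sub_distrib]
        exact Finset.sum_congr rfl fun i _ => by ring
      rw [this]
      exact Finset.dvd_sum fun i _ => Dvd.dvd.mul_left (cres_dvd_sub p (μ * a i)) _
    have h2 : p ∣ cres p (μ * T) - μ * T := by
      rw [show cres p (μ * T) - μ * T = -(μ * T - cres p (μ * T)) by ring]
      exact dvd_neg.mpr (cres_dvd_sub p (μ * T))
    have := dvd_add h2 h1
    simpa using this
  have hSabs : |S| ≤ ∑ i, |cres p (μ * a i)| := by
    calc |S| ≤ ∑ i, |e i * cres p (μ * a i)| := Finset.abs_sum_le_sum_abs _ _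
    _ ≤ ∑ i, |cres p (μ * a i)| := by
        apply Finset.sum_le_sum
        intro i _
        rcases he i with h | h <;> simp [h]
  have hc := cres_abs_lt p (μ * T) hp hodd
  have habs : |cres p (μ * T) - S| < p := by
    have := abs_sub (cres p (μ * T)) S
    omega
  have := Int.eq_zero_of_abs_lt_dvd hdvd habs
  omega
end

section
/- Let b_1,...,b_n be a basis of a lattice L in ℝ^n whose Gram-Schmidt vectors satisfy ‖b_i*‖ ≤ γ·‖b_{i+1}*‖ for all i (γ ≥ 1), and suppose ‖b_n*‖ ≤ Vol(L)^{1/n} ≤ ‖b_1*‖, where Vol(L) = Π‖b_i*‖. Then for every k ∈ {1,...,n}: ‖b_k*‖ ≤ γ^{(n-1)/2}·Vol(L)^{1/n}. -/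
theorem stmt11 (n : ℕ) (hn : 0 < n) (b : ℕ → EuclideanSpace ℝ (Fin n))
    (hli : LinearIndependent ℝ fun i : Fin n => b i)
    (γ : ℝ) (hγ : 1 ≤ γ)
    (hchain : ∀ i : ℕ, i + 1 < n →
      ‖InnerProductSpace.gramSchmidt ℝ b i‖ ≤ γ * ‖InnerProductSpace.gramSchmidt ℝ b (i + 1)‖)
    (hlast : ‖InnerProductSpace.gramSchmidt ℝ b (n - 1)‖ ≤
      (∏ i ∈ Finset.range n, ‖InnerProductSpace.gramSchmidt ℝ b i‖) ^ ((1 : ℝ) / n))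
    (hfirst : (∏ i ∈ Finset.range n, ‖InnerProductSpace.gramSchmidt ℝ b i‖) ^ ((1 : ℝ) / n) ≤
      ‖InnerProductSpace.gramSchmidt ℝ b 0‖) :
    ∀ k : ℕ, k < n →
      ‖InnerProductSpace.gramSchmidt ℝ b k‖ ≤ γ ^ (((n : ℝ) - 1) / 2) *
        (∏ i ∈ Finset.range n, ‖InnerProductSpace.gramSchmidt ℝ b i‖) ^ ((1 : ℝ) / n) := by
  intro k hk
  have hγ0 : (0:ℝ) ≤ γ := le_trans zero_le_one hγ
  set P := ∏ i ∈ Finset.range n, ‖InnerProductSpace.gramSchmidt ℝ b i‖ with hPdef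
  have hP0 : (0:ℝ) ≤ P := Finset.prod_nonneg fun i _ => norm_nonneg _
  set V := P ^ ((1:ℝ)/n) with hVdef
  have hV0 : 0 ≤ V := Real.rpow_nonneg hP0 _
  -- chain iterated
  have hA : ∀ i j : ℕ, i ≤ j → j < n →
      ‖InnerProductSpace.gramSchmidt ℝ b i‖ ≤ γ ^ (j - i) * ‖InnerProductSpace.gramSchmidt ℝ b j‖ := by
    intro i j hij
    induction j, hij using Nat.le_induction with
    | base => intro _; simp
    | succ j hij ih =>
      intro hjn
      have h1 : ‖InnerProductSpace.gramSchmidt ℝ b i‖ ≤ γ ^ (j - i) * ‖InnerProductSpace.gramSchmidt ℝ b j‖ := ih (by omega)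
      have h2 : ‖InnerProductSpace.gramSchmidt ℝ b j‖ ≤ γ * ‖InnerProductSpace.gramSchmidt ℝ b (j+1)‖ := hchain j hjn
      calc ‖InnerProductSpace.gramSchmidt ℝ b i‖ ≤ γ ^ (j - i) * ‖InnerProductSpace.gramSchmidt ℝ b j‖ := h1
        _ ≤ γ ^ (j - i) * (γ * ‖InnerProductSpace.gramSchmidt ℝ b (j+1)‖) :=
            mul_le_mul_of_nonneg_left h2 (pow_nonneg hγ0 _)
        _ = γ ^ (j + 1 - i) * ‖InnerProductSpace.gramSchmidt ℝ b (j+1)‖ := by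
            have : j + 1 - i = (j - i) + 1 := by omega
            rw [this, pow_succ]; ring
  have hB : ∀ j : ℕ, j < n → V ≤ γ ^ j * ‖InnerProductSpace.gramSchmidt ℝ b j‖ := by
    intro j hj
    have := hA 0 j (Nat.zero_le _) hj
    simpa using le_trans hfirst this
  -- per-factor bound
  set e : ℕ → ℕ := fun j => if j < k then n - 1 - k + j else j - k with he
  have key : ∀ j ∈ Finset.range n,
      ‖InnerProductSpace.gramSchmidt ℝ b k‖ ≤ γ ^ (e j) * ‖InnerProductSpace.gramSchmidt ℝ b j‖ := by
    intro j hj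
    rw [Finset.mem_range] at hj
    by_cases hjk : j < k
    · simp only [he, if_pos hjk]
      have h1 : ‖InnerProductSpace.gramSchmidt ℝ b k‖ ≤ γ ^ (n-1-k) * ‖InnerProductSpace.gramSchmidt ℝ b (n-1)‖ :=
        hA k (n-1) (by omega) (by omega)
      have h3 : V ≤ γ ^ j * ‖InnerProductSpace.gramSchmidt ℝ b j‖ := hB j (by omega)
      calc ‖InnerProductSpace.gramSchmidt ℝ b k‖ ≤ γ ^ (n-1-k) * ‖InnerProductSpace.gramSchmidt ℝ b (n-1)‖ := h1
        _ ≤ γ ^ (n-1-k) * V := mul_le_mul_of_nonneg_left hlast (pow_nonneg hγ0 _)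
        _ ≤ γ ^ (n-1-k) * (γ ^ j * ‖InnerProductSpace.gramSchmidt ℝ b j‖) :=
            mul_le_mul_of_nonneg_left h3 (pow_nonneg hγ0 _)
        _ = γ ^ (n-1-k+j) * ‖InnerProductSpace.gramSchmidt ℝ b j‖ := by rw [pow_add]; ring
    · simp only [he, if_neg hjk]
      exact hA k j (by omega) hj
  -- product bound
  have hprod : ‖InnerProductSpace.gramSchmidt ℝ b k‖ ^ n ≤ γ ^ (∑ j ∈ Finset.range n, e j) * P := by
    calc ‖InnerProductSpace.gramSchmidt ℝ b k‖ ^ n = ∏ _j ∈ Finset.range n, ‖InnerProductSpace.gramSchmidt ℝ b k‖ := by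
          rw [Finset.prod_const, Finset.card_range]
      _ ≤ ∏ j ∈ Finset.range n, (γ ^ (e j) * ‖InnerProductSpace.gramSchmidt ℝ b j‖) :=
          Finset.prod_le_prod (fun j _ => norm_nonneg _) key
      _ = (∏ j ∈ Finset.range n, γ ^ (e j)) * P := Finset.prod_mul_distrib
      _ = γ ^ (∑ j ∈ Finset.range n, e j) * P := by
          rw [Finset.prod_pow_eq_pow_sum]
  -- sum of exponents bound
  have hsum : (∑ j ∈ Finset.range n, e j) ≤ n * (n-1) / 2 := by
    have hsplit : (∑ j ∈ Finset.range k, e j) + (∑ j ∈ Finset.Ico k n, e j)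
        = ∑ j ∈ Finset.range n, e j := Finset.sum_range_add_sum_Ico e (le_of_lt hk)
    have h1 : (∑ j ∈ Finset.range k, e j) = k * (n-1-k) + ∑ j ∈ Finset.range k, j := by
      have : ∀ j ∈ Finset.range k, e j = (n-1-k) + j := by
        intro j hj
        rw [Finset.mem_range] at hj
        simp [he, hj]
      rw [Finset.sum_congr rfl this, Finset.sum_add_distrib, Finset.sum_const,
        Finset.card_range, smul_eq_mul]
    have h2 : (∑ j ∈ Finset.Ico k n, e j) = ∑ j ∈ Finset.range (n - k), j := by
      rw [Finset.sum_Ico_eq_sum_range]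
      refine Finset.sum_congr rfl fun j hj => ?_
      simp [he]
    have g1 : (∑ j ∈ Finset.range k, j) * 2 = k * (k - 1) := Finset.sum_range_id_mul_two k
    have g2 : (∑ j ∈ Finset.range (n-k), j) * 2 = (n-k) * (n-k-1) :=
      Finset.sum_range_id_mul_two (n-k)
    have h2S : (∑ j ∈ Finset.range n, e j) * 2 ≤ n * (n-1) := by
      rw [← hsplit, add_mul, h1, h2, add_mul, g1, g2]
      obtain ⟨d, rfl⟩ : ∃ d, n = k + d + 1 := ⟨n - k - 1, by omega⟩
      have e1 : k + d + 1 - 1 - k = d := by omega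
      have e2 : k + d + 1 - k = d + 1 := by omega
      have e3 : d + 1 - 1 = d := by omega
      have e4 : k + d + 1 - 1 = k + d := by omega
      rw [e1, e2, e3, e4]
      rcases k with _ | m
      · simp
      · have : (m+1) * (m+1-1) = (m+1) * m := by norm_num
        rw [this]
        nlinarith
    omega
  have hγpow : γ ^ (∑ j ∈ Finset.range n, e j) ≤ γ ^ (n * (n-1) / 2) :=
    pow_le_pow_right₀ hγ hsum
  -- convert RHS
  have hdvd : 2 ∣ n * (n - 1) := by
    rcases Nat.even_or_odd n with h | h
    · exact Dvd.dvd.mul_right h.two_dvd _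
    · exact Dvd.dvd.mul_left (Nat.Odd.sub_odd h odd_one).two_dvd _
  have hVn : V ^ n = P := by
    rw [hVdef, ← Real.rpow_natCast (P ^ ((1:ℝ)/n)) n, ← Real.rpow_mul hP0,
      one_div, inv_mul_cancel₀ (by exact_mod_cast hn.ne' : (n:ℝ) ≠ 0), Real.rpow_one]
  have hexp : ((n * (n-1) / 2 : ℕ) : ℝ) = ((n:ℝ) - 1) / 2 * n := by
    rw [Nat.cast_div hdvd (by norm_num)]
    rw [Nat.cast_mul, Nat.cast_sub hn]
    push_cast
    ring
  have hTn : (γ ^ (((n:ℝ) - 1) / 2) * V) ^ n = γ ^ (n * (n-1) / 2) * P := by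
    rw [mul_pow, hVn]
    congr 1
    rw [← Real.rpow_natCast (γ ^ (((n:ℝ)-1)/2)) n, ← Real.rpow_mul hγ0,
      ← Real.rpow_natCast γ (n * (n-1) / 2), hexp]
  have hT0 : 0 ≤ γ ^ (((n:ℝ) - 1) / 2) * V := mul_nonneg (Real.rpow_nonneg hγ0 _) hV0
  refine le_of_pow_le_pow_left₀ hn.ne' hT0 ?_
  rw [hTn]
  exact le_trans hprod (mul_le_mul_of_nonneg_right hγpow hP0)
end

section
/- Let b_1,...,b_n be a basis of a full-rank lattice L ⊆ ℝ^n with Gram-Schmidt vectors b_1*,...,b_n*, and let d_1,...,d_n be the reversed dual basis (rows of Rev((BB^T)^{-1}B)). Then ‖b_i*‖·‖d_{n-i+1}*‖ = 1 for every i ∈ {1,...,n}, where d_j* are the Gram-Schmidt vectors of d_1,...,d_n. -/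
open Matrix Submodule InnerProductSpace

open RealInnerProductSpace in
lemma aux_mem_orth_span {E : Type*} [NormedAddCommGroup E] [InnerProductSpace ℝ E]
    {S : Set E} {x : E} (h : ∀ y ∈ S, ⟪y, x⟫ = 0) : x ∈ (Submodule.span ℝ S)ᗮ := by
  rw [Submodule.mem_orthogonal]
  intro u hu
  induction hu using Submodule.span_induction with
  | mem y hy => exact h y hy
  | zero => simp
  | add u v _ _ hu hv => simp [inner_add_left, hu, hv]
  | smul c u _ hu => simp [inner_smul_left, hu]

theorem stmt18 (n : ℕ) (B : Matrix (Fin n) (Fin n) ℝ) (hB : IsUnit B.det)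
    (b d : ℕ → EuclideanSpace ℝ (Fin n))
    (hb : ∀ i : ℕ, ∀ h : i < n, b i = (WithLp.equiv 2 (Fin n → ℝ)).symm (B ⟨i, h⟩))
    (hd : ∀ i : ℕ, ∀ h : i < n,
      d i = (WithLp.equiv 2 (Fin n → ℝ)).symm (((B * Bᵀ)⁻¹ * B) (Fin.rev ⟨i, h⟩))) :
    ∀ i : ℕ, i < n →
      ‖InnerProductSpace.gramSchmidt ℝ b i‖ * ‖InnerProductSpace.gramSchmidt ℝ d (n - 1 - i)‖ = 1 := by
  have hBBT : IsUnit (B * Bᵀ).det := by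
    rw [det_mul, det_transpose]; exact hB.mul hB
  have hDdet : IsUnit ((B * Bᵀ)⁻¹ * B).det := by
    rw [det_mul]
    exact (Matrix.isUnit_nonsing_inv_det _ hBBT).mul hB
  have hDBt : (B * Bᵀ)⁻¹ * B * Bᵀ = 1 := by
    rw [Matrix.mul_assoc, Matrix.nonsing_inv_mul _ hBBT]
  -- the crucial duality of inner products
  have hdb : ∀ (j k : ℕ) (hj : j < n) (hk : k < n),
      (inner ℝ (d j) (b k) : ℝ) = if n - 1 - j = k then 1 else 0 := by
    intro j k hj hk
    rw [hd j hj, hb k hk]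
    have h1 : (inner ℝ ((WithLp.equiv 2 (Fin n → ℝ)).symm (((B * Bᵀ)⁻¹ * B) (Fin.rev ⟨j, hj⟩)))
        ((WithLp.equiv 2 (Fin n → ℝ)).symm (B ⟨k, hk⟩)) : ℝ)
        = (((B * Bᵀ)⁻¹ * B) * Bᵀ) (Fin.rev ⟨j, hj⟩) ⟨k, hk⟩ := by
      rw [Matrix.mul_apply]
      simp [PiLp.inner_apply, WithLp.equiv_symm_apply, PiLp.toLp_apply, Matrix.transpose_apply, mul_comm]
    rw [h1, hDBt, Matrix.one_apply]
    by_cases h : n - 1 - j = k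
    · rw [if_pos h, if_pos]
      ext
      simp only [Fin.val_rev]
      omega
    · rw [if_neg h, if_neg]
      intro hc
      apply h
      have := congrArg Fin.val hc
      simp only [Fin.val_rev] at this
      omega
  -- linear independence
  set e := (WithLp.linearEquiv 2 ℝ (Fin n → ℝ)).symm with he
  have hbLI : LinearIndependent ℝ (fun p : Fin n => b ↑p) := by
    have h1 : LinearIndependent ℝ (fun p : Fin n => B p) :=
      linearIndependent_rows_iff_isUnit.2 ((Matrix.isUnit_iff_isUnit_det B).2 hB)
    have h2 := h1.map' e.toLinearMap e.ker
    convert h2 using 1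
    funext p
    rw [hb p p.isLt]
    rfl
    rfl
  have hdLI : LinearIndependent ℝ (fun p : Fin n => d ↑p) := by
    have h1 : LinearIndependent ℝ (fun p : Fin n => ((B * Bᵀ)⁻¹ * B) p) :=
      linearIndependent_rows_iff_isUnit.2 ((Matrix.isUnit_iff_isUnit_det _).2 hDdet)
    have h1' : LinearIndependent ℝ (fun p : Fin n => ((B * Bᵀ)⁻¹ * B) (Fin.rev p)) :=
      h1.comp Fin.rev Fin.rev_injective
    have h2 := h1'.map' e.toLinearMap e.ker
    convert h2 using 1
    funext p
    rw [hd p p.isLt]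
    rfl
    rfl
  -- finrank of spans of initial segments
  have hseg : ∀ (f : ℕ → EuclideanSpace ℝ (Fin n)), LinearIndependent ℝ (fun p : Fin n => f ↑p) →
      ∀ m : ℕ, m ≤ n → Module.finrank ℝ (span ℝ (f '' Set.Iio m)) = m := by
    intro f hf m hm
    have himg : f '' Set.Iio m = Set.range (fun p : Fin m => f ↑p) := by
      ext y
      constructor
      · rintro ⟨x, hx, rfl⟩; exact ⟨⟨x, hx⟩, rfl⟩
      · rintro ⟨p, rfl⟩; exact ⟨p, p.isLt, rfl⟩
    have hli : LinearIndependent ℝ (fun p : Fin m => f ↑p) := by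
      have := hf.comp (Fin.castLE hm) (Fin.castLE_injective hm)
      convert this using 1
      funext p
      rfl
    rw [himg, finrank_span_eq_card hli, Fintype.card_fin]
  intro i hi
  set X := n - 1 - i with hXdef
  have hXn : X < n := by omega
  -- orthogonality of gramSchmidt d against early b's
  have key0 : ∀ m k : ℕ, k < n → m < n - 1 - k →
      (inner ℝ (gramSchmidt ℝ d m) (b k) : ℝ) = 0 := by
    intro m k hk hmk
    have hbk : b k ∈ (span ℝ (d '' Set.Iic m))ᗮ := by
      apply aux_mem_orth_span
      rintro y ⟨m', hm', rfl⟩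
      rw [Set.mem_Iic] at hm'
      rw [hdb m' k (by omega) hk, if_neg (by omega)]
    exact Submodule.inner_right_of_mem_orthogonal (gramSchmidt_mem_span ℝ d le_rfl) hbk
  have key1 : (inner ℝ (gramSchmidt ℝ d X) (b i) : ℝ) = 1 := by
    have hdXbi : (inner ℝ (d X) (b i) : ℝ) = 1 := by
      rw [hdb X i hXn hi, if_pos (by omega)]
    rw [gramSchmidt_def ℝ d X, inner_sub_left, sum_inner, hdXbi]
    have : ∀ m ∈ Finset.Iio X,
        (inner ℝ (((ℝ ∙ gramSchmidt ℝ d m).starProjection (d X) : EuclideanSpace ℝ (Fin n)))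
          (b i) : ℝ) = 0 := by
      intro m hm
      rw [Finset.mem_Iio] at hm
      rw [starProjection_singleton, real_inner_smul_left, key0 m i hi (by omega), mul_zero]
    rw [Finset.sum_congr rfl this, Finset.sum_const_zero, sub_zero]
  have key2 : (inner ℝ (gramSchmidt ℝ b i) (b i) : ℝ) = ‖gramSchmidt ℝ b i‖ ^ 2 := by
    conv_lhs => rw [gramSchmidt_def' ℝ b i]
    rw [inner_add_right, inner_sum]
    have : ∀ m ∈ Finset.Iio i,
        (inner ℝ (gramSchmidt ℝ b i)
          (((ℝ ∙ gramSchmidt ℝ b m).starProjection (b i) : EuclideanSpace ℝ (Fin n))) : ℝ)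
          = 0 := by
      intro m hm
      rw [Finset.mem_Iio] at hm
      rw [starProjection_singleton, real_inner_smul_right,
        gramSchmidt_orthogonal ℝ b (Nat.ne_of_gt hm), mul_zero]
    rw [Finset.sum_congr rfl this, Finset.sum_const_zero, add_zero,
      real_inner_self_eq_norm_sq]
  -- span comparisons
  set S := span ℝ (d '' Set.Iio X) with hSdef
  set V := span ℝ (b '' Set.Iic i) with hVdef
  have hrS : Module.finrank ℝ S = X := hseg d hdLI X (by omega)
  have hrV : Module.finrank ℝ V = i + 1 := by
    rw [hVdef, show Set.Iic i = Set.Iio (i + 1) from by ext x; simp [Nat.lt_succ_iff]]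
    exact hseg b hbLI (i + 1) (by omega)
  have hVS : V ≤ Sᗮ := by
    rw [hVdef, span_le]
    rintro y ⟨k, hk, rfl⟩
    rw [Set.mem_Iic] at hk
    show b k ∈ Sᗮ
    apply aux_mem_orth_span
    rintro z ⟨m, hm, rfl⟩
    rw [Set.mem_Iio] at hm
    rw [hdb m k (by omega) (by omega), if_neg (by omega)]
  have hrSperp : Module.finrank ℝ Sᗮ = i + 1 := by
    have h1 := Submodule.finrank_add_finrank_orthogonal S
    rw [finrank_euclideanSpace_fin, hrS] at h1
    omega
  have hVeq : V = Sᗮ := Submodule.eq_of_le_of_finrank_eq hVS (by rw [hrV, hrSperp])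
  have hgs_mem : gramSchmidt ℝ d X ∈ Sᗮ := by
    rw [show S = span ℝ (gramSchmidt ℝ d '' Set.Iio X) from (span_gramSchmidt_Iio ℝ d X).symm]
    apply aux_mem_orth_span
    rintro y ⟨m, hm, rfl⟩
    rw [Set.mem_Iio] at hm
    exact gramSchmidt_orthogonal ℝ d (Nat.ne_of_lt hm)
  have hgsV : gramSchmidt ℝ d X ∈ V := hVeq.symm ▸ hgs_mem
  -- decompose inside V
  set W := span ℝ (gramSchmidt ℝ b '' Set.Iio i) with hWdef
  have hVsup : V = W ⊔ span ℝ {gramSchmidt ℝ b i} := by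
    rw [hVdef, show span ℝ (b '' Set.Iic i) = span ℝ (gramSchmidt ℝ b '' Set.Iic i) from
      (span_gramSchmidt_Iic ℝ b i).symm, show Set.Iic i = Set.Iio i ∪ {i} from by
        ext x; simp [Nat.lt_succ_iff, Nat.le_iff_lt_or_eq], Set.image_union, span_union,
      Set.image_singleton]
  rw [hVsup, Submodule.mem_sup] at hgsV
  obtain ⟨u, hu, v, hv, huv⟩ := hgsV
  obtain ⟨c, rfl⟩ := Submodule.mem_span_singleton.1 hv
  have hgsd_Wperp : gramSchmidt ℝ d X ∈ Wᗮ := by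
    rw [hWdef, span_gramSchmidt_Iio]
    apply aux_mem_orth_span
    rintro y ⟨k, hk, rfl⟩
    rw [Set.mem_Iio] at hk
    rw [real_inner_comm]
    exact key0 X k (by omega) (by omega)
  have hgsb_Wperp : gramSchmidt ℝ b i ∈ Wᗮ := by
    rw [hWdef]
    apply aux_mem_orth_span
    rintro y ⟨k, hk, rfl⟩
    rw [Set.mem_Iio] at hk
    exact gramSchmidt_orthogonal ℝ b (Nat.ne_of_lt hk)
  have hu0 : u = 0 := by
    have hueq : u = gramSchmidt ℝ d X - c • gramSchmidt ℝ b i := by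
      rw [← huv]; abel
    have h1 : u ∈ Wᗮ := by
      rw [hueq]
      exact Submodule.sub_mem _ hgsd_Wperp (Submodule.smul_mem _ _ hgsb_Wperp)
    have h2 := Submodule.inner_right_of_mem_orthogonal hu h1
    exact inner_self_eq_zero.1 h2
  have hdc : gramSchmidt ℝ d X = c • gramSchmidt ℝ b i := by
    rw [← huv, hu0, zero_add]
  have hc : c * ‖gramSchmidt ℝ b i‖ ^ 2 = 1 := by
    rw [← key2, ← real_inner_smul_left, ← hdc, key1]
  have hcpos : 0 < c := by
    nlinarith [sq_nonneg ‖gramSchmidt ℝ b i‖]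
  rw [hdc, norm_smul, Real.norm_eq_abs, abs_of_pos hcpos]
  linear_combination hc
end

section
/- Let b_1,...,b_n be linearly independent with Gram-Schmidt vectors satisfying both (i) ‖b_i*‖ ≥ γ^{-2w}·Υ^{j-i}·‖b_j*‖ for all j < i, and (ii) ‖b_n*‖ ≤ V^{1/n} ≤ ‖b_1*‖ where V = Π‖b_i*‖, for constants γ ≥ 1, Υ > 1, and integer w ≥ 1. Then for every k ∈ {1,...,n}: ‖b_k*‖ ≤ γ^{4w}·Υ^{(n-1)/2}·V^{1/n}. -/
private lemma gauss_sum_real (m : ℕ) :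
    (∑ i ∈ Finset.range m, (i : ℝ)) = m * ((m : ℝ) - 1) / 2 := by
  induction m with
  | zero => simp
  | succ m ih =>
    rw [Finset.sum_range_succ, ih]
    push_cast
    ring


private lemma key_log (n k w : ℕ) (hn : 0 < n) (hk : k < n) (hw : 1 ≤ w)
    (x : ℕ → ℝ) (a g u : ℝ) (hg : 0 ≤ g) (hu : 0 < u)
    (hsumx : ∑ i ∈ Finset.range n, x i = (n : ℝ) * a)
    (hlog : ∀ i j : ℕ, j < i → i < n →
      x j - 2 * (w : ℝ) * g - ((i : ℝ) - (j : ℝ)) * u ≤ x i)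
    (hlast' : x (n - 1) ≤ a) (hfirst' : a ≤ x 0) :
    x k ≤ 4 * (w : ℝ) * g + (((n : ℝ) - 1) / 2) * u + a := by
  by_cases hcase : n ≤ 2 * k + 1
  · -- large k: chain to the last vector
    have hn1 : (1 : ℝ) ≤ (n : ℝ) := by exact_mod_cast hn
    have hw0 : (0 : ℝ) ≤ (w : ℝ) := Nat.cast_nonneg w
    have p2 : (0:ℝ) ≤ 2 * (w:ℝ) * g := mul_nonneg (by positivity) hg
    rcases eq_or_lt_of_le (Nat.le_sub_one_of_lt hk) with heq | hlt
    · rw [heq]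
      have p3 : (0:ℝ) ≤ ((n:ℝ) - 1) / 2 * u :=
        mul_nonneg (by linarith) hu.le
      linarith [hlast', p2, p3]
    · have h1 := hlog (n - 1) k hlt (Nat.sub_lt hn one_pos)
      have hn1' : ((n - 1 : ℕ) : ℝ) = (n : ℝ) - 1 := by
        push_cast [Nat.cast_sub hn]; ring
      rw [hn1'] at h1
      have hnk : (n : ℝ) ≤ 2 * k + 1 := by exact_mod_cast hcase
      have p1 : (0:ℝ) ≤ (2 * (k:ℝ) - ((n:ℝ) - 1)) * u :=
        mul_nonneg (by linarith) hu.le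
      nlinarith [hlast', h1, p1, p2]
  · -- small k: use the product lower bound
    push_neg at hcase
    have hkm : 2 * k + 2 ≤ n := hcase
    obtain ⟨m, hmn⟩ : ∃ m, k + m = n := ⟨n - k, Nat.add_sub_cancel' hk.le⟩
    have hkm' : k + 2 ≤ m := by omega
    have hnkm : n - k = m := by omega
    set L : ℕ → ℝ := fun i =>
      if i < k then a - 2 * (w : ℝ) * g - (i : ℝ) * u
      else x k - 2 * (w : ℝ) * g - ((i : ℝ) - (k : ℝ)) * u with hLdef
    have hL : ∀ i ∈ Finset.range n, L i ≤ x i := by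
      intro i hi'
      have hin := Finset.mem_range.mp hi'
      by_cases hik : i < k
      · simp only [hLdef, if_pos hik]
        rcases Nat.eq_zero_or_pos i with rfl | hipos
        · simp only [Nat.cast_zero]
          nlinarith [hfirst', mul_nonneg (mul_nonneg (by norm_num : (0:ℝ) ≤ 2)
            (by positivity : (0:ℝ) ≤ (w:ℝ))) hg]
        · have h1 := hlog i 0 hipos hin
          simp only [Nat.cast_zero, sub_zero] at h1
          linarith [hfirst']
      · simp only [hLdef, if_neg hik]
        push_neg at hik
        rcases eq_or_lt_of_le hik with heq | hlt
        · have h0 : ((i : ℝ) - (k : ℝ)) * u = 0 := by rw [← heq]; ring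
          rw [h0, ← heq]
          linarith [mul_nonneg (mul_nonneg (by norm_num : (0:ℝ) ≤ 2)
            (Nat.cast_nonneg w : (0:ℝ) ≤ (w:ℝ))) hg]
        · exact hlog i k hlt hin
    have hsumL : ∑ i ∈ Finset.range n, L i ≤ (n : ℝ) * a := by
      rw [← hsumx]; exact Finset.sum_le_sum hL
    have hsplit : ∑ i ∈ Finset.range n, L i
        = (∑ i ∈ Finset.range k, L i) + ∑ i ∈ Finset.Ico k n, L i := by
      rw [Finset.range_eq_Ico, ← Finset.sum_Ico_consecutive _ (Nat.zero_le k) hk.le, Finset.range_eq_Ico]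
    have hsum1 : ∑ i ∈ Finset.range k, L i
        = (k : ℝ) * a - (k : ℝ) * (2 * (w : ℝ) * g) - ((k : ℝ) * ((k : ℝ) - 1) / 2) * u := by
      have : ∀ i ∈ Finset.range k, L i = a - 2 * (w : ℝ) * g - (i : ℝ) * u := by
        intro i hi'
        simp [hLdef, Finset.mem_range.mp hi']
      rw [Finset.sum_congr rfl this]
      have e1 : ∑ i ∈ Finset.range k, ((i : ℝ) * u)
          = ((k : ℝ) * ((k : ℝ) - 1) / 2) * u := by
        rw [← Finset.sum_mul, gauss_sum_real]
      rw [Finset.sum_sub_distrib, Finset.sum_sub_distrib, e1]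
      simp only [Finset.sum_const, Finset.card_range, nsmul_eq_mul]
    have hsum2' : ∑ i ∈ Finset.Ico k n, L i
        = (m : ℝ) * x k - (m : ℝ) * (2 * (w : ℝ) * g)
          - ((m : ℝ) * ((m : ℝ) - 1) / 2) * u := by
      have h1 : ∀ i ∈ Finset.Ico k n, L i
          = x k - 2 * (w : ℝ) * g - ((i : ℝ) - (k : ℝ)) * u := by
        intro i hi'
        have := (Finset.mem_Ico.mp hi').1
        simp [hLdef, Nat.not_lt.mpr this]
      have h2 : ∀ j ∈ Finset.range m,
          x k - 2 * (w : ℝ) * g - (((k + j : ℕ) : ℝ) - (k : ℝ)) * u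
            = x k - 2 * (w : ℝ) * g - (j : ℝ) * u := by
        intro j _
        push_cast
        ring
      have e2 : ∑ j ∈ Finset.range m, ((j : ℝ) * u)
          = ((m : ℝ) * ((m : ℝ) - 1) / 2) * u := by
        rw [← Finset.sum_mul, gauss_sum_real]
      calc ∑ i ∈ Finset.Ico k n, L i
          = ∑ i ∈ Finset.Ico k n,
              (x k - 2 * (w : ℝ) * g - ((i : ℝ) - (k : ℝ)) * u) :=
            Finset.sum_congr rfl h1
        _ = ∑ j ∈ Finset.range m,
              (x k - 2 * (w : ℝ) * g - (((k + j : ℕ) : ℝ) - (k : ℝ)) * u) := by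
            rw [Finset.sum_Ico_eq_sum_range, hnkm]
        _ = ∑ j ∈ Finset.range m,
              (x k - 2 * (w : ℝ) * g - (j : ℝ) * u) := Finset.sum_congr rfl h2
        _ = (m : ℝ) * x k - (m : ℝ) * (2 * (w : ℝ) * g)
              - ((m : ℝ) * ((m : ℝ) - 1) / 2) * u := by
            rw [Finset.sum_sub_distrib, Finset.sum_sub_distrib, e2]
            simp only [Finset.sum_const, Finset.card_range, nsmul_eq_mul]
    have hkey : (m : ℝ) * x k ≤ (m : ℝ) * a + 2 * (w : ℝ) * (n : ℝ) * g
        + ((k : ℝ) * ((k : ℝ) - 1) / 2 + (m : ℝ) * ((m : ℝ) - 1) / 2) * u := by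
      have hnr : (k : ℝ) + (m : ℝ) = (n : ℝ) := by exact_mod_cast congrArg (Nat.cast (R := ℝ)) hmn
      rw [hsplit, hsum1, hsum2'] at hsumL
      have e3 : (n : ℝ) * a = (k : ℝ) * a + (m : ℝ) * a := by rw [← hnr]; ring
      have e4 : 2 * (w : ℝ) * (n : ℝ) * g
          = (k : ℝ) * (2 * (w : ℝ) * g) + (m : ℝ) * (2 * (w : ℝ) * g) := by
        rw [← hnr]; ring
      linarith [hsumL, e3, e4]
    have hmpos : (0 : ℝ) < (m : ℝ) := by
      have : 0 < m := by omega
      exact_mod_cast this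
    have hnr : (k : ℝ) + (m : ℝ) = (n : ℝ) := by exact_mod_cast congrArg (Nat.cast (R := ℝ)) hmn
    have hkmr : (k : ℝ) + 2 ≤ (m : ℝ) := by exact_mod_cast hkm'
    have hk0 : (0 : ℝ) ≤ (k : ℝ) := Nat.cast_nonneg k
    have hw0 : (0 : ℝ) ≤ (w : ℝ) := Nat.cast_nonneg w
    have hkey2 : (m : ℝ) * x k ≤ (m : ℝ) * a + 2 * (w : ℝ) * ((k : ℝ) + (m : ℝ)) * g
        + ((k : ℝ) * ((k : ℝ) - 1) / 2 + (m : ℝ) * ((m : ℝ) - 1) / 2) * u := by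
      rw [hnr]; exact hkey
    have h2 : (m : ℝ) * x k
        ≤ (m : ℝ) * (4 * (w : ℝ) * g + (((n : ℝ) - 1) / 2) * u + a) := by
      rw [← hnr]
      nlinarith [hkey2, mul_nonneg (mul_nonneg (sub_nonneg.mpr (by linarith : (k:ℝ) ≤ (m:ℝ))) hw0) hg,
        mul_nonneg (mul_nonneg hk0 (by linarith : (0:ℝ) ≤ (m:ℝ) - (k:ℝ) + 1)) hu.le]
    exact le_of_mul_le_mul_left h2 hmpos

theorem stmt19 (n : ℕ) (hn : 0 < n) (b : ℕ → EuclideanSpace ℝ (Fin n))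
    (hli : LinearIndependent ℝ fun i : Fin n => b i)
    (γ Υ : ℝ) (hγ : 1 ≤ γ) (hΥ : 1 < Υ) (w : ℕ) (hw : 1 ≤ w)
    (hi : ∀ i j : ℕ, j < i → i < n →
      ‖InnerProductSpace.gramSchmidt ℝ b i‖ ≥ γ ^ (-(2 * (w : ℝ))) * Υ ^ ((j : ℝ) - (i : ℝ)) *
        ‖InnerProductSpace.gramSchmidt ℝ b j‖)
    (hlast : ‖InnerProductSpace.gramSchmidt ℝ b (n - 1)‖ ≤
      (∏ i ∈ Finset.range n, ‖InnerProductSpace.gramSchmidt ℝ b i‖) ^ ((1 : ℝ) / n))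
    (hfirst : (∏ i ∈ Finset.range n, ‖InnerProductSpace.gramSchmidt ℝ b i‖) ^ ((1 : ℝ) / n) ≤
      ‖InnerProductSpace.gramSchmidt ℝ b 0‖) :
    ∀ k : ℕ, k < n →
      ‖InnerProductSpace.gramSchmidt ℝ b k‖ ≤ γ ^ (4 * (w : ℝ)) * Υ ^ (((n : ℝ) - 1) / 2) *
        (∏ i ∈ Finset.range n, ‖InnerProductSpace.gramSchmidt ℝ b i‖) ^ ((1 : ℝ) / n) := by
  have hγ0 : (0 : ℝ) < γ := lt_of_lt_of_le one_pos hγ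
  have hΥ0 : (0 : ℝ) < Υ := lt_trans one_pos hΥ
  have hcpos : ∀ i, i < n → 0 < ‖InnerProductSpace.gramSchmidt ℝ b i‖ := by
    intro i hi'
    have hne : InnerProductSpace.gramSchmidt ℝ b i ≠ 0 := by
      apply InnerProductSpace.gramSchmidt_ne_zero_coe
      exact hli.comp (fun x : Set.Iic i => (⟨x.1, lt_of_le_of_lt x.2 hi'⟩ : Fin n))
        (fun x y hxy => Subtype.ext (congrArg Fin.val hxy))
    exact norm_pos_iff.mpr hne
  have hVpos : 0 < ∏ i ∈ Finset.range n, ‖InnerProductSpace.gramSchmidt ℝ b i‖ :=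
    Finset.prod_pos fun i hi' => hcpos i (Finset.mem_range.mp hi')
  have hApos : 0 < (∏ i ∈ Finset.range n, ‖InnerProductSpace.gramSchmidt ℝ b i‖) ^ ((1 : ℝ) / n) :=
    Real.rpow_pos_of_pos hVpos _
  have hg : 0 ≤ Real.log γ := Real.log_nonneg hγ
  have hu : 0 < Real.log Υ := Real.log_pos hΥ
  have hsumx : ∑ i ∈ Finset.range n, Real.log ‖InnerProductSpace.gramSchmidt ℝ b i‖
      = (n : ℝ) * Real.log ((∏ i ∈ Finset.range n, ‖InnerProductSpace.gramSchmidt ℝ b i‖) ^ ((1 : ℝ) / n)) := by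
    rw [Real.log_rpow hVpos,
      Real.log_prod (fun i hi' => (hcpos i (Finset.mem_range.mp hi')).ne')]
    have hn0 : (n : ℝ) ≠ 0 := Nat.cast_ne_zero.mpr hn.ne'
    field_simp
  have hlog : ∀ i j : ℕ, j < i → i < n →
      Real.log ‖InnerProductSpace.gramSchmidt ℝ b j‖ - 2 * (w : ℝ) * Real.log γ
        - ((i : ℝ) - (j : ℝ)) * Real.log Υ ≤ Real.log ‖InnerProductSpace.gramSchmidt ℝ b i‖ := by
    intro i j hji hin
    have h := hi i j hji hin
    have hcj := hcpos j (hji.trans hin)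
    have hp1 : (0:ℝ) < γ ^ (-(2 * (w : ℝ))) := Real.rpow_pos_of_pos hγ0 _
    have hp2 : (0:ℝ) < Υ ^ ((j : ℝ) - (i : ℝ)) := Real.rpow_pos_of_pos hΥ0 _
    have h1 : Real.log (γ ^ (-(2 * (w : ℝ))) * Υ ^ ((j : ℝ) - (i : ℝ)) * ‖InnerProductSpace.gramSchmidt ℝ b j‖)
        ≤ Real.log ‖InnerProductSpace.gramSchmidt ℝ b i‖ :=
      Real.log_le_log (mul_pos (mul_pos hp1 hp2) hcj) h
    rw [Real.log_mul (mul_pos hp1 hp2).ne' hcj.ne',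
      Real.log_mul hp1.ne' hp2.ne',
      Real.log_rpow hγ0, Real.log_rpow hΥ0] at h1
    linarith [h1]
  have hlast' : Real.log ‖InnerProductSpace.gramSchmidt ℝ b (n - 1)‖
      ≤ Real.log ((∏ i ∈ Finset.range n, ‖InnerProductSpace.gramSchmidt ℝ b i‖) ^ ((1 : ℝ) / n)) :=
    Real.log_le_log (hcpos (n - 1) (Nat.sub_lt hn one_pos)) hlast
  have hfirst' : Real.log ((∏ i ∈ Finset.range n, ‖InnerProductSpace.gramSchmidt ℝ b i‖) ^ ((1 : ℝ) / n))
      ≤ Real.log ‖InnerProductSpace.gramSchmidt ℝ b 0‖ := Real.log_le_log hApos hfirst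
  intro k hk
  have key : Real.log ‖InnerProductSpace.gramSchmidt ℝ b k‖ ≤ 4 * (w : ℝ) * Real.log γ
      + (((n : ℝ) - 1) / 2) * Real.log Υ
      + Real.log ((∏ i ∈ Finset.range n, ‖InnerProductSpace.gramSchmidt ℝ b i‖) ^ ((1 : ℝ) / n)) :=
    key_log n k w hn hk hw (fun i => Real.log ‖InnerProductSpace.gramSchmidt ℝ b i‖) _ _ _ hg hu hsumx
      hlog hlast' hfirst'
  have hck := hcpos k hk
  have hq1 : (0:ℝ) < γ ^ (4 * (w : ℝ)) := Real.rpow_pos_of_pos hγ0 _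
  have hq2 : (0:ℝ) < Υ ^ (((n : ℝ) - 1) / 2) := Real.rpow_pos_of_pos hΥ0 _
  have hRHS : 0 < γ ^ (4 * (w : ℝ)) * Υ ^ (((n : ℝ) - 1) / 2) *
      (∏ i ∈ Finset.range n, ‖InnerProductSpace.gramSchmidt ℝ b i‖) ^ ((1 : ℝ) / n) :=
    mul_pos (mul_pos hq1 hq2) hApos
  rw [← Real.exp_log hck, ← Real.exp_log hRHS]
  apply Real.exp_le_exp.mpr
  rw [Real.log_mul (mul_pos hq1 hq2).ne' hApos.ne',
    Real.log_mul hq1.ne' hq2.ne',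
    Real.log_rpow hγ0, Real.log_rpow hΥ0]
  exact key
end
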